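/- arXiv:2005.03693 — 2 statements merged into one kernel-verified Lean document; each statement's English description precedes it below -/
import Mathlib

section
/- The map taking a pair of a belief and a normalized utility function to the SEU preference relation it induces is continuous: if a sequence of beliefs (π^n) converges uniformly to π ∈ Π and a sequence (u^n) in 𝒰̄ converges to u ∈ 𝒰̄, then the preference relations ≿(π^n, u^n) represented by (π^n, u^n) converge to ≿(π, u) in R̄. -/
open MeasureTheory

/-- An act: a measurable map from states to outcomes. -/
abbrev Act (Ω O : Type*) [MeasurableSpace Ω] [MeasurableSpace O] : Type _ :=
  {f : Ω → O // Measurable f}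

/-- Non-atomicity of a measure relative to an explicit σ-algebra `m'`:
for every `m'`-measurable set of positive measure there is an `m'`-measurable
subset of strictly smaller positive measure. -/
def NonatomicOn {Ω : Type*} [MeasurableSpace Ω] (π : MeasureTheory.Measure Ω)
    (m' : MeasurableSpace Ω) : Prop :=
  ∀ E : Set Ω, MeasurableSet[m'] E → 0 < π E →
    ∃ F : Set Ω, MeasurableSet[m'] F ∧ F ⊆ E ∧ 0 < π F ∧ π F < π E

section Framework

variable {Ω O I : Type*} [mΩ : MeasurableSpace Ω] [mO : MeasurableSpace O]

/-- A belief: a non-atomic (countably additive) probability measure. -/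
def IsBelief (π : Measure Ω) : Prop :=
  IsProbabilityMeasure π ∧ NonatomicOn π mΩ

/-- A utility function: a bounded measurable function on outcomes. -/
def IsUtility (u : O → ℝ) : Prop :=
  Measurable u ∧ ∃ M : ℝ, ∀ x, |u x| ≤ M

/-- A normalized utility function: measurable with infimum 0 and supremum 1. -/
def NormalizedUtility (u : O → ℝ) : Prop :=
  Measurable u ∧ IsGLB (Set.range u) 0 ∧ IsLUB (Set.range u) 1

/-- Member of `𝒰̄`: normalized or identically zero. -/
def NormalizedUtilityBar (u : O → ℝ) : Prop :=
  NormalizedUtility u ∨ u = 0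

/-- Subjective expected utility of an act. -/
noncomputable def ev (π : Measure Ω) (u : O → ℝ) (f : Act Ω O) : ℝ :=
  ∫ ω, u (f.1 ω) ∂π

/-- Preference relations over acts. -/
abbrev Pref (Ω O : Type*) [MeasurableSpace Ω] [MeasurableSpace O] :=
  Act Ω O → Act Ω O → Prop

/-- `(π, u)` represents `r`: `f ≿ g` iff the expected utility of `f` is at least
that of `g`. -/
def Represents (π : Measure Ω) (u : O → ℝ) (r : Pref Ω O) : Prop :=
  ∀ f g : Act Ω O, r f g ↔ ev π u g ≤ ev π u f

/-- A normalized representation: a belief together with a normalized (or zero)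
utility function representing the relation. -/
def NormRep (π : Measure Ω) (u : O → ℝ) (r : Pref Ω O) : Prop :=
  IsBelief π ∧ NormalizedUtilityBar u ∧ Represents π u r

/-- Membership in `R̄`: the relation maximizes subjective expected utility. -/
def IsSEU (r : Pref Ω O) : Prop :=
  ∃ (π : Measure Ω) (u : O → ℝ), IsBelief π ∧ IsUtility u ∧ Represents π u r

/-- Complete indifference: the relation with empty strict part. -/
def CompletelyIndifferent (r : Pref Ω O) : Prop :=
  ∀ f g : Act Ω O, r f g

/-- `π` is a belief representing `r` (together with some utility function). -/
def RepresentsBelief (π : Measure Ω) (r : Pref Ω O) : Prop :=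
  IsBelief π ∧ ∃ u : O → ℝ, IsUtility u ∧ Represents π u r

/-- A preference profile: every agent's relation is SEU-maximizing. -/
def IsProfile (p : I → Pref Ω O) : Prop := ∀ i, IsSEU (p i)

/-- The completely indifferent relation. -/
def indiffRel : Pref Ω O := fun _ _ => True

open Classical in
/-- `p_{∼i}`: replace agent `i`'s relation by complete indifference. -/
noncomputable def updIndiff (p : I → Pref Ω O) (i : I) : I → Pref Ω O :=
  fun j => if j = i then indiffRel else p j

/-- `p_{∼{i,j}}`. -/
noncomputable def updIndiffPair (p : I → Pref Ω O) (i j : I) : I → Pref Ω O :=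
  updIndiff (updIndiff p i) j

open Classical in
/-- `I_p`: the set of concerned agents. -/
noncomputable def concerned [Fintype I] (p : I → Pref Ω O) : Finset I :=
  Finset.univ.filter fun i => ¬ CompletelyIndifferent (p i)

/-- Equivalence of utility functions: equality up to a positive affine
transformation. -/
def UEquiv (u v : O → ℝ) : Prop :=
  ∃ a : ℝ, 0 < a ∧ ∃ b : ℝ, ∀ x, u x = a * v x + b

/-- The beliefs `(πa i)_{i ∈ J}` are affinely independent. -/
def BeliefsAffIndep (J : Finset I) (πa : I → Measure Ω) : Prop :=
  ∀ c : I → ℝ, (∑ i ∈ J, c i) = 0 →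
    (∀ E : Set Ω, MeasurableSet E → (∑ i ∈ J, c i * (πa i E).toReal) = 0) →
    ∀ i ∈ J, c i = 0

/-- The utility functions `(ua i)_{i ∈ J}` are linearly independent: no
nontrivial linear combination of them is a constant function. -/
def UtilsLinIndep (J : Finset I) (ua : I → O → ℝ) : Prop :=
  ∀ c : I → ℝ, (∃ b : ℝ, ∀ x, (∑ i ∈ J, c i * ua i x) = b) → ∀ i ∈ J, c i = 0

/-- The profile has non-degenerate beliefs: the beliefs of any pair and any
triple of concerned agents are affinely independent. -/
def NonDegenerateBeliefs [Fintype I] (p : I → Pref Ω O) (πa : I → Measure Ω) : Prop :=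
  ∀ J : Finset I, J ⊆ concerned p → (J.card = 2 ∨ J.card = 3) → BeliefsAffIndep J πa

/-- The profile has non-degenerate utilities: the utility functions of any pair
and any triple of concerned agents are linearly independent. -/
def NonDegenerateUtils [Fintype I] (p : I → Pref Ω O) (ua : I → O → ℝ) : Prop :=
  ∀ J : Finset I, J ⊆ concerned p → (J.card = 2 ∨ J.card = 3) → UtilsLinIndep J ua

/-- The belief dimension of the beliefs `(πa i)_{i ∈ J}` is at least `n`. -/
def BeliefDimAtLeast (n : ℕ) (J : Finset I) (πa : I → Measure Ω) : Prop :=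
  ∃ E : Fin n → Set Ω, (∀ k, MeasurableSet (E k)) ∧
    ∀ c : Fin n → ℝ, (∀ i ∈ J, (∑ k, c k * (πa i (E k)).toReal) = 0) → ∀ k, c k = 0

/-- The utility dimension of the utility functions `(ua i)_{i ∈ J}` is at
least `n`. -/
def UtilDimAtLeast (n : ℕ) (J : Finset I) (ua : I → O → ℝ) : Prop :=
  ∃ q : Fin n → Measure O, (∀ k, IsProbabilityMeasure (q k)) ∧
    ∀ c : Fin n → ℝ, (∀ i ∈ J, (∑ k, c k * ∫ x, ua i x ∂(q k)) = 0) → ∀ k, c k = 0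

open Classical in
/-- The expected utility function of an SEU relation (via a choice of a
normalized representation). -/
noncomputable def evOf (r : Pref Ω O) : Act Ω O → ℝ :=
  if h : ∃ π : Measure Ω, ∃ u : O → ℝ, NormRep π u r then
    fun f => ev h.choose h.choose_spec.choose f
  else fun _ => 0

/-- The uniform metric on `R`. -/
noncomputable def prefDist (r r' : Pref Ω O) : ℝ :=
  ⨆ f : Act Ω O, |evOf r f - evOf r' f|

/-- Continuity of a real-valued function on `R` with respect to the uniform
metric. -/
def ContOnR (h : Pref Ω O → ℝ) : Prop :=
  ∀ r : Pref Ω O, IsSEU r → ¬ CompletelyIndifferent r →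
    ∀ ε : ℝ, 0 < ε → ∃ δ : ℝ, 0 < δ ∧
      ∀ r' : Pref Ω O, IsSEU r' → ¬ CompletelyIndifferent r' →
        prefDist r r' < δ → |h r' - h r| < ε

/-- Open sets of `R̄`: the whole space `R̄` together with the metrically open
subsets of `R`. -/
def OpenInRbar (S : Set (Pref Ω O)) : Prop :=
  S = {r | IsSEU r} ∨
    ∀ r ∈ S, IsSEU r ∧ ¬ CompletelyIndifferent r ∧
      ∃ ε : ℝ, 0 < ε ∧ ∀ r' : Pref Ω O, IsSEU r' → ¬ CompletelyIndifferent r' →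
        prefDist r r' < ε → r' ∈ S

/-- Restricted monotonicity (on a domain `D` of profiles). -/
def RestrictedMonotonicityOn (D : (I → Pref Ω O) → Prop)
    (Φ : (I → Pref Ω O) → Pref Ω O) : Prop :=
  ∀ (i : I) (p : I → Pref Ω O), D p →
    ∀ πsi πi : Measure Ω,
      RepresentsBelief πsi (Φ (updIndiff p i)) → RepresentsBelief πi (p i) →
      ∀ f g : Act Ω O,
        Φ (updIndiff p i) f g → Φ (updIndiff p i) g f →
        Measure.map f.1 πsi = Measure.map f.1 πi →
        Measure.map g.1 πsi = Measure.map g.1 πi →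
        (p i f g → Φ p f g) ∧ ((p i f g ∧ ¬ p i g f) → (Φ p f g ∧ ¬ Φ p g f))

abbrev RestrictedMonotonicity (Φ : (I → Pref Ω O) → Pref Ω O) : Prop :=
  RestrictedMonotonicityOn IsProfile Φ

/-- Faithfulness (on a domain `D`). -/
def FaithfulOn (D : (I → Pref Ω O) → Prop) (Φ : (I → Pref Ω O) → Pref Ω O) : Prop :=
  ∀ p : I → Pref Ω O, D p → (∀ i, CompletelyIndifferent (p i)) →
    CompletelyIndifferent (Φ p)

abbrev Faithful (Φ : (I → Pref Ω O) → Pref Ω O) : Prop := FaithfulOn IsProfile Φ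

/-- No belief imposition (on a domain `D`). -/
def NoBeliefImpositionOn (D : (I → Pref Ω O) → Prop)
    (Φ : (I → Pref Ω O) → Pref Ω O) : Prop :=
  ∀ (i : I) (p : I → Pref Ω O), D p →
    ¬ CompletelyIndifferent (Φ (updIndiff p i)) →
    ¬ CompletelyIndifferent (Φ p) →
    ¬ CompletelyIndifferent (p i) →
    ∀ πsi π πi : Measure Ω,
      RepresentsBelief πsi (Φ (updIndiff p i)) →
      RepresentsBelief π (Φ p) → RepresentsBelief πi (p i) →
      πsi ≠ πi → π ≠ πi

abbrev NoBeliefImposition (Φ : (I → Pref Ω O) → Pref Ω O) : Prop :=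
  NoBeliefImpositionOn IsProfile Φ

/-- Continuity of an SWF (on a domain `D`), with respect to the topology of
`R̄` and the product topology on profiles. -/
def ContinuousSWFOn (D : (I → Pref Ω O) → Prop)
    (Φ : (I → Pref Ω O) → Pref Ω O) : Prop :=
  ∀ S : Set (Pref Ω O), OpenInRbar S →
    ∀ p : I → Pref Ω O, D p → Φ p ∈ S →
      ∃ T : I → Set (Pref Ω O), (∀ i, OpenInRbar (T i)) ∧ (∀ i, p i ∈ T i) ∧
        ∀ q : I → Pref Ω O, D q → (∀ i, q i ∈ T i) → Φ q ∈ S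

abbrev ContinuousSWF (Φ : (I → Pref Ω O) → Pref Ω O) : Prop :=
  ContinuousSWFOn IsProfile Φ

/-- Anonymity (on a domain `D`). -/
def AnonymousOn (D : (I → Pref Ω O) → Prop)
    (Φ : (I → Pref Ω O) → Pref Ω O) : Prop :=
  ∀ p : I → Pref Ω O, D p → ∀ η : Equiv.Perm I, Φ (fun i => p (η i)) = Φ p

abbrev Anonymous (Φ : (I → Pref Ω O) → Pref Ω O) : Prop := AnonymousOn IsProfile Φ

/-- The regular set of acts `𝒜(ℰ', O')`. -/
def RegularActs (m' : MeasurableSpace Ω) (O' : Set O) : Set (@Act Ω O mΩ mO) :=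
  {f : @Act Ω O mΩ mO | @Measurable Ω O m' mO f.1 ∧ Set.range f.1 ⊆ O'}

/-- `𝒜(ℰ', O')` is co-redundant for `p` (with representing beliefs `πa`). -/
def CoRedundant (m' : MeasurableSpace Ω) (O' : Set O)
    (p : I → @Pref Ω O mΩ mO) (πa : I → @MeasureTheory.Measure Ω mΩ) : Prop :=
  (∀ f : @Act Ω O mΩ mO, ∃ g ∈ @RegularActs Ω O mΩ mO m' O', ∀ i, p i f g ∧ p i g f) ∧
  (∀ i, @NonatomicOn Ω mΩ (πa i) m')

/-- Independence of redundant acts (on a domain `D`). -/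
def IndepRedundantActsOn (D : (I → Pref Ω O) → Prop)
    (Φ : (I → Pref Ω O) → Pref Ω O) : Prop :=
  ∀ (p p' : I → Pref Ω O) (πa πa' : I → Measure Ω),
    D p → D p' →
    (∀ i, RepresentsBelief (πa i) (p i)) →
    (∀ i, RepresentsBelief (πa' i) (p' i)) →
    ∀ (m' : {m : MeasurableSpace Ω // m ≤ mΩ}) (O' : Set O),
      CoRedundant m'.1 O' p πa → CoRedundant m'.1 O' p' πa' →
      (∀ i : I, ∀ f ∈ RegularActs m'.1 O', ∀ g ∈ RegularActs m'.1 O',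
        (p i f g ↔ p' i f g)) →
      ∀ f ∈ RegularActs m'.1 O', ∀ g ∈ RegularActs m'.1 O',
        (Φ p f g ↔ Φ p' f g)

abbrev IndepRedundantActs (Φ : (I → Pref Ω O) → Pref Ω O) : Prop :=
  IndepRedundantActsOn IsProfile Φ

/-- The weighted average of the concerned agents' beliefs with weights `v`. -/
noncomputable def mixBelief [Fintype I] (p : I → Pref Ω O) (πa : I → Measure Ω)
    (v : I → ℝ) : Measure Ω :=
  (ENNReal.ofReal ((∑ i ∈ concerned p, v i)⁻¹)) •
    ∑ i ∈ concerned p, ENNReal.ofReal (v i) • πa i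

/-- The weighted sum of the concerned agents' utility functions with weights
`w`. -/
noncomputable def mixUtil [Fintype I] (p : I → Pref Ω O) (ua : I → O → ℝ)
    (w : I → ℝ) : O → ℝ :=
  fun x => ∑ i ∈ concerned p, w i * ua i x

/-- A common utility profile: every concerned agent's normalized utility
function is equivalent to `u` or to `-u` for a single `u ∈ 𝒰`. -/
def CommonUtilityProfile [Fintype I] (p : I → Pref Ω O) (ua : I → O → ℝ) : Prop :=
  ∃ u : O → ℝ, NormalizedUtility u ∧
    ∀ i ∈ concerned p, UEquiv (ua i) u ∨ UEquiv (ua i) (fun x => - u x)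

end Framework

/-!
Write `r(π, u)` for the relation represented by `(π, u)`. If `u = 0` then `r(π, u)` is complete
indifference. Otherwise `u` is normalized, so eventually `uₙ ≠ 0` is normalized too and takes
values both above and below `1/2`; comparing two constant acts then shows that `r(πₙ, uₙ)` is
not completely indifferent. For the distance, split
`EV(πₙ, uₙ) - EV(π, u) = (EV(πₙ, uₙ) - EV(πₙ, u)) + (EV(πₙ, u) - EV(π, u))`:
the first term is at most `sup |uₙ - u|`, and by the layer-cake formula
`∫ g dμ = ∫₀¹ μ {g ≥ t} dt` for `0 ≤ g ≤ 1` the second is at most `sup_E |πₙ(E) - π(E)|`.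
-/

theorem abs_integral_sub_integral_le_of_abs_measureReal_sub_le {α : Type*}
    [MeasurableSpace α] {μ ν : Measure α} [IsFiniteMeasure μ] [IsFiniteMeasure ν] {g : α → ℝ}
    (hg : Measurable g) (hg0 : ∀ a, 0 ≤ g a) (hg1 : ∀ a, g a ≤ 1) {δ : ℝ}
    (hμν : ∀ E, MeasurableSet E → |μ.real E - ν.real E| ≤ δ) :
    |∫ a, g a ∂μ - ∫ a, g a ∂ν| ≤ δ := by
  have layer_cake : ∀ (κ : Measure α) [IsFiniteMeasure κ],
      ∫ a, g a ∂κ = ∫ t in (0 : ℝ)..1, κ.real {a | t ≤ g a} := fun κ _ => by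
    have hint : Integrable g κ :=
      .of_bound hg.aestronglyMeasurable 1 <| .of_forall fun a => by
        rw [Real.norm_of_nonneg (hg0 a)]; exact hg1 a
    rw [intervalIntegral.integral_of_le zero_le_one]
    exact hint.integral_eq_integral_Ioc_meas_le (.of_forall hg0) (.of_forall hg1)
  have tail_antitone : ∀ (κ : Measure α) [IsFiniteMeasure κ],
      Antitone fun t => κ.real {a | t ≤ g a} :=
    fun κ _ _ _ hst => measureReal_mono fun _ h => hst.trans h
  rw [layer_cake μ, layer_cake ν, ← intervalIntegral.integral_sub
    (tail_antitone μ).intervalIntegrable (tail_antitone ν).intervalIntegrable]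
  simpa using intervalIntegral.norm_integral_le_of_norm_le_const (a := 0) (b := 1)
    fun t _ => (Real.norm_eq_abs _).trans_le (hμν {a | t ≤ g a} (hg measurableSet_Ici))

section SEU

variable {Ω O : Type*} [MeasurableSpace Ω] [MeasurableSpace O]

theorem NormalizedUtility.nonneg {u : O → ℝ} (hu : NormalizedUtility u) (x : O) : 0 ≤ u x :=
  hu.2.1.1 ⟨x, rfl⟩

theorem NormalizedUtility.le_one {u : O → ℝ} (hu : NormalizedUtility u) (x : O) : u x ≤ 1 :=
  hu.2.2.1 ⟨x, rfl⟩

theorem NormalizedUtility.isUtility {u : O → ℝ} (hu : NormalizedUtility u) : IsUtility u :=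
  ⟨hu.1, 1, fun x => by rw [abs_of_nonneg (hu.nonneg x)]; exact hu.le_one x⟩

theorem NormalizedUtility.ne_zero {u : O → ℝ} (hu : NormalizedUtility u) : u ≠ 0 := by
  rintro rfl
  have : (1 : ℝ) ≤ 0 := hu.2.2.2 (by rintro _ ⟨x, rfl⟩; rfl)
  linarith

theorem NormalizedUtility.exists_lt {u : O → ℝ} (hu : NormalizedUtility u) :
    ∃ x y, u x < u y := by
  obtain ⟨_, ⟨x, rfl⟩, -, hx⟩ := hu.2.1.exists_between (show (0 : ℝ) < 1 / 2 by norm_num)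
  obtain ⟨_, ⟨y, rfl⟩, hy, -⟩ := hu.2.2.exists_between (show (1 / 2 : ℝ) < 1 by norm_num)
  exact ⟨x, y, hx.trans hy⟩

theorem IsUtility.integrable_comp {u : O → ℝ} (hu : IsUtility u) (π : Measure Ω)
    [IsFiniteMeasure π] (f : Act Ω O) : Integrable (fun ω => u (f.1 ω)) π :=
  let ⟨M, hM⟩ := hu.2
  .of_bound (hu.1.comp f.2).aestronglyMeasurable M (.of_forall fun ω => hM (f.1 ω))

theorem ev_const (π : Measure Ω) [IsProbabilityMeasure π] (u : O → ℝ) (x : O) :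
    ev π u ⟨fun _ => x, measurable_const⟩ = u x := by
  simp [ev]

theorem Represents.completelyIndifferent_of_eq_zero {π : Measure Ω} {r : Pref Ω O}
    (hr : Represents π 0 r) : CompletelyIndifferent r := fun f g => by
  simp [hr f g, ev]

theorem Represents.not_completelyIndifferent {π : Measure Ω} [IsProbabilityMeasure π]
    {u : O → ℝ} {r : Pref Ω O} (hr : Represents π u r) {x y : O} (hxy : u x < u y) :
    ¬ CompletelyIndifferent r := fun hind => by
  have := (hr _ _).1 (hind ⟨fun _ => x, measurable_const⟩ ⟨fun _ => y, measurable_const⟩)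
  rw [ev_const, ev_const] at this
  linarith

theorem abs_ev_sub_ev_utility_le {π : Measure Ω} [IsProbabilityMeasure π] {u v : O → ℝ}
    (hu : IsUtility u) (hv : IsUtility v) {ε : ℝ} (huv : ∀ x, |u x - v x| ≤ ε)
    (f : Act Ω O) :
    |ev π u f - ev π v f| ≤ ε := by
  rw [ev, ev, ← integral_sub (hu.integrable_comp π f) (hv.integrable_comp π f)]
  simpa using norm_integral_le_of_norm_le_const (μ := π)
    (.of_forall fun ω => (Real.norm_eq_abs _).trans_le (huv (f.1 ω)))

theorem abs_ev_sub_ev_belief_le {μ ν : Measure Ω} [IsFiniteMeasure μ] [IsFiniteMeasure ν]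
    {u : O → ℝ} (hu : NormalizedUtility u) {δ : ℝ}
    (hμν : ∀ E, MeasurableSet E → |μ.real E - ν.real E| ≤ δ) (f : Act Ω O) :
    |ev μ u f - ev ν u f| ≤ δ :=
  abs_integral_sub_integral_le_of_abs_measureReal_sub_le (hu.1.comp f.2)
    (fun _ => hu.nonneg _) (fun _ => hu.le_one _) hμν

end SEU

theorem stmt10_general {Ω O : Type*} [mΩ : MeasurableSpace Ω] [mO : MeasurableSpace O]
    (πn : ℕ → Measure Ω) (un : ℕ → O → ℝ)
    (π : Measure Ω) (u : O → ℝ)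
    (hn : ∀ n, IsBelief (πn n) ∧ NormalizedUtilityBar (un n))
    (hπ : IsBelief π) (hu : NormalizedUtilityBar u)
    (rn : ℕ → Pref Ω O) (r : Pref Ω O)
    (hrn : ∀ n, Represents (πn n) (un n) (rn n))
    (hr : Represents π u r)
    (hπconv : ∀ ε : ℝ, 0 < ε → ∃ N : ℕ, ∀ n ≥ N, ∀ E : Set Ω, MeasurableSet E →
      |(πn n E).toReal - (π E).toReal| < ε)
    (huconv : u = 0 ∨
      ∀ ε : ℝ, 0 < ε → ∃ N : ℕ, ∀ n ≥ N, un n ≠ 0 ∧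
        ∀ x : O, |un n x - u x| < ε) :
    CompletelyIndifferent r ∨
      ∀ ε : ℝ, 0 < ε → ∃ N : ℕ, ∀ n ≥ N, ¬ CompletelyIndifferent (rn n) ∧
        ∀ f : Act Ω O, |ev (πn n) (un n) f - ev π u f| < ε := by
  rcases hu.symm with rfl | hu
  · exact .inl hr.completelyIndifferent_of_eq_zero
  have huconv := huconv.resolve_left hu.ne_zero
  refine .inr fun ε hε => ?_
  obtain ⟨N₁, hN₁⟩ := huconv (ε / 3) (by positivity)
  obtain ⟨N₂, hN₂⟩ := hπconv (ε / 3) (by positivity)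
  refine ⟨max N₁ N₂, fun n hn_ge => ?_⟩
  obtain ⟨hun_ne, hun_close⟩ := hN₁ n (le_of_max_le_left hn_ge)
  have : IsProbabilityMeasure (πn n) := (hn n).1.1
  have : IsProbabilityMeasure π := hπ.1
  have hun : NormalizedUtility (un n) := (hn n).2.resolve_right hun_ne
  obtain ⟨x, y, hxy⟩ := hun.exists_lt
  refine ⟨(hrn n).not_completelyIndifferent hxy, fun f => ?_⟩
  have h_util := abs_ev_sub_ev_utility_le (π := πn n) hun.isUtility hu.isUtility
    (fun x => (hun_close x).le) f
  have h_belief := abs_ev_sub_ev_belief_le hu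
    (fun E hE => (hN₂ n (le_of_max_le_right hn_ge) E hE).le) f
  linarith [abs_sub_le (ev (πn n) (un n) f) (ev (πn n) u f) (ev π u f)]

theorem stmt10 {Ω O : Type*} [mΩ : MeasurableSpace Ω] [mO : MeasurableSpace O]
    (hO : 4 ≤ Cardinal.mk O)
    (πn : ℕ → Measure Ω) (un : ℕ → O → ℝ)
    (π : Measure Ω) (u : O → ℝ)
    (hn : ∀ n, IsBelief (πn n) ∧ NormalizedUtilityBar (un n))
    (hπ : IsBelief π) (hu : NormalizedUtilityBar u)
    (rn : ℕ → Pref Ω O) (r : Pref Ω O)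
    (hrn : ∀ n, Represents (πn n) (un n) (rn n))
    (hr : Represents π u r)
    (hπconv : ∀ ε : ℝ, 0 < ε → ∃ N : ℕ, ∀ n ≥ N, ∀ E : Set Ω, MeasurableSet E →
      |(πn n E).toReal - (π E).toReal| < ε)
    (huconv : u = 0 ∨
      ∀ ε : ℝ, 0 < ε → ∃ N : ℕ, ∀ n ≥ N, un n ≠ 0 ∧
        ∀ x : O, |un n x - u x| < ε) :
    CompletelyIndifferent r ∨
      ∀ ε : ℝ, 0 < ε → ∃ N : ℕ, ∀ n ≥ N, ¬ CompletelyIndifferent (rn n) ∧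
        ∀ f : Act Ω O, |ev (πn n) (un n) f - ev π u f| < ε :=
  stmt10_general (mΩ := mΩ) (mO := mO) πn un π u hn hπ hu rn r hrn hr hπconv huconv
end

section
/- Let π and π' be non-atomic countably additive probability measures on a measurable space (Ω, ℰ). Then there exists a sequence of finite measurable partitions (P_k)_{k≥0} of Ω such that P_k = {E_k^1, …, E_k^{2^k}} consists of 2^k cells, P_{k+1} refines P_k, and π(E_k^m) = π'(E_k^m) = 2^{−k} for every k ≥ 0 and every m ∈ {1, …, 2^k}. -/
open MeasureTheory

/-!
Put `σ = π + π'`, again non-atomic. By Sierpiński's theorem every measurable set can be halved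
for `σ`, and halving repeatedly (a dyadic tree of cells) yields an increasing measurable family
`F t ⊆ A`, `t ∈ [0, 1]`, with `σ (F t) = t σ A`. Along it `t ↦ π (F (t + 1/2) \ F t)` is
continuous, and its values at `t = 0` and `t = 1/2` add up to `π A`; by the intermediate value
theorem some `H = F (t + 1/2) \ F t` has `π H = π A / 2`, and since `σ H = σ A / 2` also
`π' H = π' A / 2`. Halving all cells simultaneously for `π` and `π'`, generation after generation,
gives the partitions.
-/

open Set ENNReal Function

theorem ENNReal.exists_le_two_mul_of_iSup_ne_top {ι : Type*} [Nonempty ι] (f : ι → ℝ≥0∞)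
    (hf : ⨆ i, f i ≠ ∞) : ∃ i, ∀ j, f j ≤ 2 * f i := by
  rcases eq_or_ne (⨆ i, f i) 0 with h0 | h0
  · exact ⟨Classical.arbitrary ι, fun j => by simp [ENNReal.iSup_eq_zero.mp h0 j]⟩
  · obtain ⟨i, hi⟩ := lt_iSup_iff.mp (ENNReal.half_lt_self h0 hf)
    refine ⟨i, fun j => ?_⟩
    calc f j ≤ ⨆ i, f i := le_iSup f j
      _ = 2 * ((⨆ i, f i) / 2) := (ENNReal.mul_div_cancel' (by simp) (by simp)).symm
      _ ≤ 2 * f i := by gcongr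

theorem MeasureTheory.exists_subset_sdiff_measure_le_two_mul {Ω : Type*} [MeasurableSpace Ω]
    (μ : Measure Ω) (A C : Set Ω) {r : ℝ≥0∞} (hr : r ≠ ∞) (hC : μ C ≤ r) :
    ∃ D ⊆ A \ C, MeasurableSet D ∧ μ C + μ D ≤ r ∧
      ∀ D' ⊆ A \ C, MeasurableSet D' → μ C + μ D' ≤ r → μ D' ≤ 2 * μ D := by
  let T := {D | D ⊆ A \ C ∧ MeasurableSet D ∧ μ C + μ D ≤ r}
  have : Nonempty T := ⟨∅, empty_subset _, .empty, by simpa using hC⟩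
  obtain ⟨⟨D, hDC, hD, hDr⟩, hmax⟩ := ENNReal.exists_le_two_mul_of_iSup_ne_top
    (fun D : T => μ D) (ne_top_of_le_ne_top hr (iSup_le fun D => le_add_self.trans D.2.2.2))
  exact ⟨D, hDC, hD, hDr, fun D' hD'C hD' hD'r => hmax ⟨D', hD'C, hD', hD'r⟩⟩

namespace NonatomicOn

variable {Ω : Type*} [mΩ : MeasurableSpace Ω] {μ ν : Measure Ω} {A : Set Ω}

theorem exists_subset_measure_pos_sdiff_pos (hμ : NonatomicOn μ mΩ) [IsFiniteMeasure μ]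
    (hA : MeasurableSet A) (hpos : 0 < μ A) :
    ∃ F ⊆ A, MeasurableSet F ∧ 0 < μ F ∧ 0 < μ (A \ F) := by
  obtain ⟨F, hF, hFA, hF0, hFlt⟩ := hμ A hA hpos
  refine ⟨F, hFA, hF, hF0, ?_⟩
  rw [measure_sdiff hFA hF.nullMeasurableSet (measure_ne_top μ F)]
  exact tsub_pos_of_lt hFlt

theorem add [IsFiniteMeasure μ] [IsFiniteMeasure ν] (hμ : NonatomicOn μ mΩ)
    (hν : NonatomicOn ν mΩ) : NonatomicOn (μ + ν) mΩ := by
  intro E hE hpos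
  obtain ⟨F, hFE, hF, hF0, hEF0⟩ :
      ∃ F ⊆ E, MeasurableSet F ∧ 0 < (μ + ν) F ∧ 0 < (μ + ν) (E \ F) := by
    rcases add_pos_iff.mp (show 0 < μ E + ν E from hpos) with h | h
    · obtain ⟨F, hFE, hF, hF0, hEF0⟩ := hμ.exists_subset_measure_pos_sdiff_pos hE h
      exact ⟨F, hFE, hF, hF0.trans_le le_self_add, hEF0.trans_le le_self_add⟩
    · obtain ⟨F, hFE, hF, hF0, hEF0⟩ := hν.exists_subset_measure_pos_sdiff_pos hE h
      exact ⟨F, hFE, hF, hF0.trans_le le_add_self, hEF0.trans_le le_add_self⟩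
  refine ⟨F, hF, hFE, hF0, ?_⟩
  rw [← union_sdiff_cancel hFE, measure_union disjoint_sdiff_right (hE.diff hF)]
  exact ENNReal.lt_add_right (measure_ne_top _ _) hEF0.ne'

theorem exists_subset_measure_pos_le_half (hμ : NonatomicOn μ mΩ) [IsFiniteMeasure μ]
    (hA : MeasurableSet A) (hpos : 0 < μ A) :
    ∃ C ⊆ A, MeasurableSet C ∧ 0 < μ C ∧ μ C ≤ μ A / 2 := by
  obtain ⟨F, hFA, hF, hF0, hAF0⟩ := hμ.exists_subset_measure_pos_sdiff_pos hA hpos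
  rcases le_or_gt (μ F) (μ A / 2) with h | h
  · exact ⟨F, hFA, hF, hF0, h⟩
  · refine ⟨A \ F, sdiff_subset, hA.diff hF, hAF0, ?_⟩
    rw [measure_sdiff hFA hF.nullMeasurableSet (measure_ne_top μ F)]
    calc μ A - μ F ≤ μ A - μ A / 2 := tsub_le_tsub_left h.le _
      _ = μ A / 2 := ENNReal.sub_half (measure_ne_top μ A)

theorem exists_subset_measure_pos_le (hμ : NonatomicOn μ mΩ) [IsFiniteMeasure μ]
    (hA : MeasurableSet A) (hpos : 0 < μ A) {ε : ℝ≥0∞} (hε : 0 < ε) :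
    ∃ C ⊆ A, MeasurableSet C ∧ 0 < μ C ∧ μ C ≤ ε := by
  have hsmall : ∀ n : ℕ, ∃ C ⊆ A, MeasurableSet C ∧ 0 < μ C ∧ μ C ≤ μ A * 2⁻¹ ^ n := by
    intro n
    induction n with
    | zero => exact ⟨A, subset_rfl, hA, hpos, by simp⟩
    | succ n ih =>
      obtain ⟨C, hCA, hC, hC0, hCle⟩ := ih
      obtain ⟨D, hDC, hD, hD0, hDle⟩ := hμ.exists_subset_measure_pos_le_half hC hC0
      refine ⟨D, hDC.trans hCA, hD, hD0, hDle.trans ?_⟩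
      rw [pow_succ, ← mul_assoc, ← div_eq_mul_inv]
      gcongr
  obtain ⟨n, hn⟩ :=
    ENNReal.exists_inv_two_pow_lt (ENNReal.div_pos hε.ne' (measure_ne_top μ A)).ne'
  obtain ⟨C, hCA, hC, hC0, hCle⟩ := hsmall n
  refine ⟨C, hCA, hC, hC0, hCle.trans ?_⟩
  calc μ A * 2⁻¹ ^ n ≤ μ A * (ε / μ A) := by gcongr
    _ ≤ ε := ENNReal.mul_div_le

/-- Sierpiński's theorem. -/
theorem exists_subset_measure_eq (hμ : NonatomicOn μ mΩ) [IsFiniteMeasure μ]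
    (hA : MeasurableSet A) {r : ℝ≥0∞} (hr : r ≤ μ A) :
    ∃ C ⊆ A, MeasurableSet C ∧ μ C = r := by
  have hr_top : r ≠ ∞ := (hr.trans_lt (measure_lt_top μ A)).ne
  -- greedily add a set that realises at least half of what can still be added
  choose! next hnext_sub hnext hnext_le hmax using
    fun C => exists_subset_sdiff_measure_le_two_mul μ A C hr_top
  let C : ℕ → Set Ω := fun n => Nat.rec ∅ (fun _ C => C ∪ next C) n
  have hC_zero : C 0 = ∅ := rfl
  have hC_succ (n : ℕ) : C (n + 1) = C n ∪ next (C n) := rfl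
  have hC : ∀ n, C n ⊆ A ∧ MeasurableSet (C n) ∧ μ (C n) ≤ r := by
    intro n
    induction n with
    | zero => simp [hC_zero]
    | succ n ih =>
      have hsub := hnext_sub (C n) ih.2.2
      refine ⟨union_subset ih.1 (hsub.trans sdiff_subset), ih.2.1.union (hnext _ ih.2.2), ?_⟩
      rw [hC_succ, measure_union (disjoint_sdiff_right.mono_right hsub) (hnext _ ih.2.2)]
      exact hnext_le _ ih.2.2
  have hC_mono : Monotone C := monotone_nat_of_le_succ fun n => subset_union_left
  have hL_le : μ (⋃ n, C n) ≤ r := by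
    rw [hC_mono.measure_iUnion]
    exact iSup_le fun n => (hC n).2.2
  have hLA : (⋃ n, C n) ⊆ A := iUnion_subset fun n => (hC n).1
  have hL : MeasurableSet (⋃ n, C n) := .iUnion fun n => (hC n).2.1
  refine ⟨⋃ n, C n, hLA, hL, hL_le.antisymm (not_lt.mp fun hlt => ?_)⟩
  -- a small piece `D` of what is left is a candidate at every stage, so every stage adds `μ D / 2`
  obtain ⟨D, hDsub, hD, hD0, hDle⟩ := hμ.exists_subset_measure_pos_le (hA.diff hL)
    (by
      rw [measure_sdiff hLA hL.nullMeasurableSet (measure_ne_top _ _)]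
      exact tsub_pos_of_lt (hlt.trans_le hr))
    (tsub_pos_of_lt hlt)
  have hgrow : ∀ n : ℕ, n * (μ D / 2) ≤ μ (C n) := by
    intro n
    induction n with
    | zero => simp
    | succ n ih =>
      have hnext_ge : μ D / 2 ≤ μ (next (C n)) := by
        refine ENNReal.div_le_of_le_mul' (hmax (C n) (hC n).2.2 D
          (hDsub.trans (sdiff_subset_sdiff_right (subset_iUnion C n))) hD ?_)
        exact (add_le_add (measure_mono (subset_iUnion C n)) hDle).trans
          (add_tsub_cancel_of_le hL_le).le
      have hsub := hnext_sub (C n) (hC n).2.2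
      rw [hC_succ, measure_union (disjoint_sdiff_right.mono_right hsub) (hnext _ (hC n).2.2)]
      push_cast
      rw [add_mul, one_mul]
      gcongr
  obtain ⟨n, hn⟩ := ENNReal.exists_nat_mul_gt (ENNReal.half_pos hD0.ne').ne' hr_top
  exact (hn.trans_le ((hgrow n).trans (hC n).2.2)).false

end NonatomicOn

theorem exists_subset_choice_fun {Ω : Type*} [MeasurableSpace Ω] {p : Set Ω → Set Ω → Prop}
    (hex : ∀ s, MeasurableSet s → ∃ H ⊆ s, MeasurableSet H ∧ p s H) :
    ∃ h : Set Ω → Set Ω, (∀ s, h s ⊆ s) ∧ (∀ s, MeasurableSet s → MeasurableSet (h s)) ∧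
      ∀ s, MeasurableSet s → p s (h s) := by
  classical
  choose! h hsub hmeas hp using hex
  refine ⟨fun s => if MeasurableSet s then h s else ∅, fun s => ?_, fun s hs => ?_,
    fun s hs => ?_⟩
  · dsimp only
    split_ifs with hs
    exacts [hsub s hs, empty_subset s]
  · simpa [hs] using hmeas s hs
  · simpa [hs] using hp s hs

section DyadicTree

variable {Ω : Type*}

/-- The index `j` ranges over all of `ℕ`: the cells with `j ≥ 2 ^ n` are empty. -/
def dyadicTree (h : Set Ω → Set Ω) (A : Set Ω) : ℕ → ℕ → Set Ω
  | 0, j => if j = 0 then A else ∅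
  | n + 1, j =>
    if j % 2 = 0 then h (dyadicTree h A n (j / 2))
    else dyadicTree h A n (j / 2) \ h (dyadicTree h A n (j / 2))

variable {h : Set Ω → Set Ω} {A : Set Ω}

theorem dyadicTree_succ_subset (hsub : ∀ s, h s ⊆ s) (n j : ℕ) :
    dyadicTree h A (n + 1) j ⊆ dyadicTree h A n (j / 2) := by
  rw [dyadicTree]
  split_ifs
  exacts [hsub _, sdiff_subset]

theorem dyadicTree_subset (hsub : ∀ s, h s ⊆ s) (n j : ℕ) : dyadicTree h A n j ⊆ A := by
  induction n generalizing j with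
  | zero =>
    rw [dyadicTree]
    split_ifs
    exacts [subset_rfl, empty_subset A]
  | succ n ih => exact (dyadicTree_succ_subset hsub n j).trans (ih _)

theorem dyadicTree_succ_union (hsub : ∀ s, h s ⊆ s) (n j : ℕ) :
    dyadicTree h A (n + 1) (2 * j) ∪ dyadicTree h A (n + 1) (2 * j + 1) = dyadicTree h A n j := by
  simp only [dyadicTree, Nat.mul_mod_right, Nat.mul_add_mod, Nat.mul_div_cancel_left _ two_pos,
    Nat.mul_add_div two_pos]
  simpa using union_sdiff_cancel (hsub _)

theorem exists_lt_mem_dyadicTree (hsub : ∀ s, h s ⊆ s) {x : Ω} (hx : x ∈ A) (n : ℕ) :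
    ∃ j < 2 ^ n, x ∈ dyadicTree h A n j := by
  induction n with
  | zero => exact ⟨0, by simp, by simpa [dyadicTree] using hx⟩
  | succ n ih =>
    obtain ⟨j, hj, hxj⟩ := ih
    rw [← dyadicTree_succ_union hsub] at hxj
    rcases hxj with hxj | hxj
    exacts [⟨2 * j, by omega, hxj⟩, ⟨2 * j + 1, by omega, hxj⟩]

theorem pairwise_disjoint_dyadicTree (hsub : ∀ s, h s ⊆ s) (n : ℕ) :
    Pairwise (Disjoint on (dyadicTree h A n)) := by
  induction n with
  | zero =>
    intro j j' hne
    simp only [Function.onFun, dyadicTree]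
    split_ifs <;> simp_all
  | succ n ih =>
    intro j j' hne
    by_cases hparent : j / 2 = j' / 2
    · have hparity : j % 2 ≠ j' % 2 := by omega
      simp only [Function.onFun, dyadicTree, hparent]
      split_ifs <;> first | omega | exact disjoint_sdiff_right | exact disjoint_sdiff_left
    · exact (ih hparent).mono (dyadicTree_succ_subset hsub n j) (dyadicTree_succ_subset hsub n j')

theorem biUnion_range_dyadicTree_subset_succ (hsub : ∀ s, h s ⊆ s) (n k : ℕ) :
    ⋃ j ∈ Finset.range k, dyadicTree h A n j ⊆
      ⋃ j ∈ Finset.range (2 * k), dyadicTree h A (n + 1) j := by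
  simp only [subset_def, mem_iUnion, Finset.mem_range]
  rintro x ⟨j, hj, hxj⟩
  rw [← dyadicTree_succ_union hsub] at hxj
  rcases hxj with hxj | hxj
  exacts [⟨2 * j, by omega, hxj⟩, ⟨2 * j + 1, by omega, hxj⟩]

variable [MeasurableSpace Ω]

theorem measurableSet_dyadicTree (hmeas : ∀ s, MeasurableSet s → MeasurableSet (h s))
    (hA : MeasurableSet A) (n j : ℕ) : MeasurableSet (dyadicTree h A n j) := by
  induction n generalizing j with
  | zero =>
    rw [dyadicTree]
    split_ifs
    exacts [hA, .empty]
  | succ n ih =>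
    rw [dyadicTree]
    split_ifs
    exacts [hmeas _ (ih _), (ih _).diff (hmeas _ (ih _))]

theorem measure_dyadicTree {μ : Measure Ω} [IsFiniteMeasure μ] (hsub : ∀ s, h s ⊆ s)
    (hmeas : ∀ s, MeasurableSet s → MeasurableSet (h s))
    (hhalf : ∀ s, MeasurableSet s → μ (h s) = μ s / 2) (hA : MeasurableSet A) {n j : ℕ}
    (hj : j < 2 ^ n) : μ (dyadicTree h A n j) = μ A / 2 ^ n := by
  induction n generalizing j with
  | zero => simp [dyadicTree, show j = 0 by simpa using hj]
  | succ n ih =>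
    have hP := measurableSet_dyadicTree hmeas hA n (j / 2)
    have hhalf_P : μ (dyadicTree h A n (j / 2)) / 2 = μ A / 2 ^ (n + 1) := by
      rw [ih (by omega)]
      simp [div_eq_mul_inv, pow_succ, ENNReal.mul_inv, mul_assoc]
    rw [dyadicTree]
    split_ifs
    · rw [hhalf _ hP, hhalf_P]
    · rw [measure_sdiff (hsub _) (hmeas _ hP).nullMeasurableSet (measure_ne_top _ _), hhalf _ hP,
        ENNReal.sub_half (measure_ne_top _ _), hhalf_P]

theorem measureReal_biUnion_range_dyadicTree {μ : Measure Ω} [IsFiniteMeasure μ]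
    (hsub : ∀ s, h s ⊆ s) (hmeas : ∀ s, MeasurableSet s → MeasurableSet (h s))
    (hhalf : ∀ s, MeasurableSet s → μ (h s) = μ s / 2) (hA : MeasurableSet A) {n k : ℕ}
    (hk : k ≤ 2 ^ n) :
    μ.real (⋃ j ∈ Finset.range k, dyadicTree h A n j) = k / 2 ^ n * μ.real A := by
  rw [measureReal_biUnion_finset ((pairwise_disjoint_dyadicTree hsub n).set_pairwise _)
    fun j _ => measurableSet_dyadicTree hmeas hA n j]
  rw [Finset.sum_congr rfl fun j hj => by
    rw [measureReal_def, measure_dyadicTree hsub hmeas hhalf hA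
      ((Finset.mem_range.mp hj).trans_le hk)]]
  simp only [toReal_div, toReal_pow, toReal_ofNat, Finset.sum_const, Finset.card_range,
    nsmul_eq_mul, measureReal_def]
  ring

end DyadicTree

namespace NonatomicOn

variable {Ω : Type*} [mΩ : MeasurableSpace Ω] {μ : Measure Ω} {A : Set Ω}

theorem exists_monotone_measureReal_eq_mul (hμ : NonatomicOn μ mΩ) [IsFiniteMeasure μ]
    (hA : MeasurableSet A) :
    ∃ F : ℝ → Set Ω, Monotone F ∧ (∀ t, MeasurableSet (F t)) ∧ F 0 = ∅ ∧ F 1 = A ∧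
      ∀ t ∈ Icc (0 : ℝ) 1, μ.real (F t) = t * μ.real A := by
  obtain ⟨h, hsub, hmeas, hhalf⟩ := exists_subset_choice_fun (p := fun s H => μ H = μ s / 2)
    fun s hs => hμ.exists_subset_measure_eq hs ENNReal.half_le_self
  let G : ℕ → ℕ → Set Ω := fun n k => ⋃ j ∈ Finset.range k, dyadicTree h A n j
  have hG_mono (n : ℕ) : Monotone (G n) := fun k k' hkk' => by
    simp only [G, subset_def, mem_iUnion, Finset.mem_range]
    exact fun x ⟨j, hj, hx⟩ => ⟨j, hj.trans_le hkk', hx⟩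
  refine ⟨fun t => ⋃ n, G n ⌊t * 2 ^ n⌋₊, fun t t' htt' => ?_, fun t => ?_, by simp [G], ?_,
    fun t ht => ?_⟩
  · exact iUnion_mono fun n => hG_mono n (Nat.floor_mono (by gcongr))
  · exact .iUnion fun n =>
      Finset.measurableSet_biUnion _ fun j _ => measurableSet_dyadicTree hmeas hA n j
  · refine (iUnion_subset fun n => iUnion₂_subset fun j _ => dyadicTree_subset hsub n j).antisymm
      (subset_trans ?_ (subset_iUnion _ 0))
    simp [dyadicTree]
  · obtain ⟨ht0, ht1⟩ := ht
    have hchain : Monotone fun n => G n ⌊t * 2 ^ n⌋₊ := by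
      refine monotone_nat_of_le_succ fun n => ?_
      refine (biUnion_range_dyadicTree_subset_succ hsub n _).trans (hG_mono (n + 1) ?_)
      rw [Nat.le_floor_iff (by positivity), pow_succ]
      push_cast
      nlinarith [Nat.floor_le (show 0 ≤ t * 2 ^ n by positivity)]
    have hlim := (ENNReal.tendsto_toReal (measure_ne_top μ _)).comp
      (tendsto_measure_iUnion_atTop hchain)
    refine tendsto_nhds_unique hlim ?_
    have hval (n : ℕ) : μ.real (G n ⌊t * 2 ^ n⌋₊) = ⌊t * 2 ^ n⌋₊ / 2 ^ n * μ.real A :=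
      measureReal_biUnion_range_dyadicTree hsub hmeas hhalf hA
        (Nat.floor_le_of_le (by push_cast; nlinarith [pow_pos (two_pos (α := ℝ)) n]))
    simp only [comp_def, ← measureReal_def, hval]
    exact ((tendsto_nat_floor_mul_div_atTop ht0).comp
      (tendsto_pow_atTop_atTop_of_one_lt one_lt_two)).mul_const _

end NonatomicOn

theorem continuousOn_of_monotoneOn_of_sub_le_mul {f : ℝ → ℝ} {s : Set ℝ} {K : ℝ}
    (hf : MonotoneOn f s) (hK : ∀ x ∈ s, ∀ y ∈ s, x ≤ y → f y - f x ≤ K * (y - x)) :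
    ContinuousOn f s := by
  refine (LipschitzOnWith.of_dist_le_mul (K := K.toNNReal) fun x hx y hy => ?_).continuousOn
  rw [Real.dist_eq, Real.dist_eq, Real.coe_toNNReal']
  rcases le_total x y with hxy | hxy
  · rw [abs_of_nonpos (by linarith [hf hx hy hxy]), abs_of_nonpos (by linarith)]
    nlinarith [hK x hx y hy hxy, le_max_left K 0]
  · rw [abs_of_nonneg (by linarith [hf hy hx hxy]), abs_of_nonneg (by linarith)]
    nlinarith [hK y hy x hx hxy, le_max_left K 0]

theorem exists_sub_eq_half_of_continuousOn {φ : ℝ → ℝ} (hφ : ContinuousOn φ (Icc 0 1)) :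
    ∃ t ∈ Icc (0 : ℝ) (1 / 2), φ (t + 1 / 2) - φ t = (φ 1 - φ 0) / 2 := by
  let ψ : ℝ → ℝ := fun t => φ (t + 1 / 2) - φ t
  have hψ : ContinuousOn ψ (Icc 0 (1 / 2)) := by
    refine (hφ.comp (by fun_prop) fun t ht => ?_).sub
      (hφ.mono (Icc_subset_Icc le_rfl (by norm_num)))
    exact ⟨by linarith [ht.1], by linarith [ht.2]⟩
  have hmem : (φ 1 - φ 0) / 2 ∈ uIcc (ψ 0) (ψ (1 / 2)) := by
    have : ψ 0 + ψ (1 / 2) = φ 1 - φ 0 := by norm_num [ψ]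
    rcases le_total (ψ 0) (ψ (1 / 2)) with h | h
    · exact uIcc_of_le h ▸ ⟨by linarith, by linarith⟩
    · exact uIcc_of_ge h ▸ ⟨by linarith, by linarith⟩
  rw [← uIcc_of_le (by norm_num : (0 : ℝ) ≤ 1 / 2)] at hψ ⊢
  exact intermediate_value_uIcc hψ hmem

theorem MeasureTheory.measure_eq_half_of_measureReal_eq_half {Ω : Type*} [MeasurableSpace Ω]
    {μ : Measure Ω} [IsFiniteMeasure μ] {s t : Set Ω} (h : μ.real s = μ.real t / 2) :
    μ s = μ t / 2 := by
  rw [← ofReal_measureReal (μ := μ) (s := s), h, ENNReal.ofReal_div_of_pos two_pos,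
    ofReal_measureReal]
  simp

section Halving

variable {Ω : Type*} [mΩ : MeasurableSpace Ω] {π π' : Measure Ω} [IsFiniteMeasure π]
  [IsFiniteMeasure π']

theorem exists_halves_of_monotone {F : ℝ → Set Ω} (hF : Monotone F)
    (hFm : ∀ t, MeasurableSet (F t)) (hF0 : F 0 = ∅)
    (hlin : ∀ t ∈ Icc (0 : ℝ) 1, (π + π').real (F t) = t * (π + π').real (F 1)) :
    ∃ H ⊆ F 1, MeasurableSet H ∧ π H = π (F 1) / 2 ∧ π' H = π' (F 1) / 2 := by
  set φ : ℝ → ℝ := fun t => π.real (F t)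
  set φ' : ℝ → ℝ := fun t => π'.real (F t)
  have hsum (t) (ht : t ∈ Icc (0 : ℝ) 1) : φ t + φ' t = t * (φ 1 + φ' 1) := by
    have := hlin t ht
    rwa [measureReal_add_apply, measureReal_add_apply] at this
  have hφ_mono : Monotone φ := fun t t' htt' => measureReal_mono (hF htt')
  have hφ'_mono : Monotone φ' := fun t t' htt' => measureReal_mono (hF htt')
  have hφ_cont : ContinuousOn φ (Icc 0 1) :=
    continuousOn_of_monotoneOn_of_sub_le_mul (hφ_mono.monotoneOn _) fun x hx y hy hxy => by
      nlinarith [hsum x hx, hsum y hy, hφ'_mono hxy]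
  obtain ⟨t, ht, ht_half⟩ := exists_sub_eq_half_of_continuousOn hφ_cont
  have hφ0 : φ 0 = 0 := by simp [φ, hF0]
  have ht₁ : t ∈ Icc (0 : ℝ) 1 := ⟨ht.1, by linarith [ht.2]⟩
  have ht₂ : t + 1 / 2 ∈ Icc (0 : ℝ) 1 := ⟨by linarith [ht.1], by linarith [ht.2]⟩
  have hsub : F t ⊆ F (t + 1 / 2) := hF (by norm_num)
  refine ⟨F (t + 1 / 2) \ F t, sdiff_subset.trans (hF ht₂.2), (hFm _).diff (hFm _), ?_, ?_⟩
  · refine measure_eq_half_of_measureReal_eq_half ?_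
    rw [measureReal_sdiff hsub (hFm t)]
    linarith
  · refine measure_eq_half_of_measureReal_eq_half ?_
    rw [measureReal_sdiff hsub (hFm t)]
    linarith [hsum t ht₁, hsum _ ht₂]

theorem NonatomicOn.exists_subset_halves (hπ : NonatomicOn π mΩ) (hπ' : NonatomicOn π' mΩ)
    {A : Set Ω} (hA : MeasurableSet A) :
    ∃ H ⊆ A, MeasurableSet H ∧ π H = π A / 2 ∧ π' H = π' A / 2 := by
  obtain ⟨F, hF, hFm, hF0, rfl, hlin⟩ := (hπ.add hπ').exists_monotone_measureReal_eq_mul hA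
  exact exists_halves_of_monotone hF hFm hF0 hlin

end Halving

theorem stmt13 {Ω : Type*} [m : MeasurableSpace Ω]
    (π π' : MeasureTheory.Measure Ω)
    (hπ : MeasureTheory.IsProbabilityMeasure π)
    (hπ' : MeasureTheory.IsProbabilityMeasure π')
    (hna : NonatomicOn π m) (hna' : NonatomicOn π' m) :
    ∃ E : (k : ℕ) → Fin (2 ^ k) → Set Ω,
      (∀ k j, MeasurableSet (E k j)) ∧
      (∀ k, ∀ j j' : Fin (2 ^ k), j ≠ j' → Disjoint (E k j) (E k j')) ∧
      (∀ k, (⋃ j, E k j) = Set.univ) ∧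
      (∀ k, ∀ j : Fin (2 ^ (k + 1)), ∃ j' : Fin (2 ^ k), E (k + 1) j ⊆ E k j') ∧
      (∀ k j, π (E k j) = 1 / 2 ^ k ∧ π' (E k j) = 1 / 2 ^ k) := by
  obtain ⟨h, hsub, hmeas, hhalf⟩ :=
    exists_subset_choice_fun fun A hA => hna.exists_subset_halves hna' hA
  refine ⟨fun k j => dyadicTree h univ k j, fun k j => measurableSet_dyadicTree hmeas .univ k j,
    fun k j j' hne => pairwise_disjoint_dyadicTree hsub k (Fin.val_injective.ne hne),
    fun k => ?_, fun k j => ⟨⟨j / 2, by omega⟩, dyadicTree_succ_subset hsub k j⟩,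
    fun k j => ⟨?_, ?_⟩⟩
  · refine eq_univ_of_forall fun x => ?_
    obtain ⟨j, hj, hx⟩ := exists_lt_mem_dyadicTree hsub (mem_univ x) k
    exact mem_iUnion.mpr ⟨⟨j, hj⟩, hx⟩
  · rw [measure_dyadicTree hsub hmeas (fun s hs => (hhalf s hs).1) .univ j.2, measure_univ]
  · rw [measure_dyadicTree hsub hmeas (fun s hs => (hhalf s hs).2) .univ j.2, measure_univ]
end
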